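/- If a signed eulerian graph G can be decomposed into three edge-disjoint eulerian subgraphs each having an odd number of negative edges, then G is the union of two eulerian subgraphs each having an even number of negative edges. -/

import Mathlib

open Finset

/-- A signed multigraph on vertex type `V` with edge type `E`: each edge `e`
consists of two half-edges indexed by `Bool`; `ends e i` is the end-vertex at
which the half-edge `(e, i)` is attached (loops and multiple edges are
allowed), and `sign e ∈ {1, -1}` is the sign of the edge `e`. -/
structure SignedGraph (V E : Type) where
  ends : E → Bool → V
  sign : E → ℤˣ

namespace SignedGraph

variable {V E : Type} [Fintype V] [Fintype E] [DecidableEq V] [DecidableEq E]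

/-- The valency of `v` in the subgraph spanned by the edge set `S`:
the number of half-edges of edges of `S` attached at `v` (a loop at `v`
contributes `2`). -/
def valencyOn (G : SignedGraph V E) (S : Finset E) (v : V) : ℕ :=
  (univ.filter fun p : E × Bool => p.1 ∈ S ∧ G.ends p.1 p.2 = v).card

/-- The valency of a vertex in `G`. -/
def valency (G : SignedGraph V E) (v : V) : ℕ :=
  G.valencyOn univ v

/-- The set of vertices incident with some edge of `S`. -/
def suppV (G : SignedGraph V E) (S : Finset E) : Finset V :=
  univ.filter fun v => ∃ e ∈ S, ∃ i : Bool, G.ends e i = v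

/-- `u` and `v` are joined by an edge of `S`. -/
def AdjOn (G : SignedGraph V E) (S : Finset E) (u v : V) : Prop :=
  ∃ e ∈ S, ∃ i : Bool, G.ends e i = u ∧ G.ends e (!i) = v

/-- The subgraph spanned by the edge set `S` is connected: any two vertices
incident with edges of `S` are joined by a walk using edges of `S`. -/
def ConnOn (G : SignedGraph V E) (S : Finset E) : Prop :=
  ∀ u ∈ G.suppV S, ∀ v ∈ G.suppV S, Relation.ReflTransGen (G.AdjOn S) u v

/-- `G` is connected (as a graph on the whole vertex set `V`). -/
def Connected (G : SignedGraph V E) : Prop :=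
  Nonempty V ∧ ∀ u v : V, Relation.ReflTransGen (G.AdjOn univ) u v

/-- The edge set `S` spans a circuit: a nonempty connected `2`-regular
subgraph. -/
def IsCircuit (G : SignedGraph V E) (S : Finset E) : Prop :=
  S.Nonempty ∧ G.ConnOn S ∧ ∀ v ∈ G.suppV S, G.valencyOn S v = 2

/-- The sign of a set of edges: the product of the signs of its edges. -/
def signOf (G : SignedGraph V E) (S : Finset E) : ℤˣ :=
  ∏ e ∈ S, G.sign e

/-- The negative edges among `S`. -/
def negEdges (G : SignedGraph V E) (S : Finset E) : Finset E :=
  S.filter fun e => G.sign e = -1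

/-- A balanced circuit: a circuit of sign `+1`. -/
def IsBalancedCircuit (G : SignedGraph V E) (S : Finset E) : Prop :=
  G.IsCircuit S ∧ G.signOf S = 1

/-- An unbalanced circuit: a circuit of sign `-1`. -/
def IsUnbalancedCircuit (G : SignedGraph V E) (S : Finset E) : Prop :=
  G.IsCircuit S ∧ G.signOf S = -1

/-- `G` is balanced: it contains no unbalanced circuit. -/
def Balanced (G : SignedGraph V E) : Prop :=
  ∀ S : Finset E, G.IsCircuit S → G.signOf S = 1

/-- `G` is tightly unbalanced: it is unbalanced, but for some edge `f` the
graph `G - f` is balanced. -/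
def TightlyUnbalanced (G : SignedGraph V E) : Prop :=
  ¬ G.Balanced ∧ ∃ f : E, ∀ S : Finset E, G.IsCircuit S → f ∉ S → G.signOf S = 1

/-- `G` is eulerian: connected with all valencies even. -/
def Eulerian (G : SignedGraph V E) : Prop :=
  G.Connected ∧ ∀ v : V, Even (G.valency v)

/-- The edge set `S` spans an eulerian subgraph of `G`. -/
def EulerianOn (G : SignedGraph V E) (S : Finset E) : Prop :=
  S.Nonempty ∧ G.ConnOn S ∧ ∀ v : V, Even (G.valencyOn S v)

/-- An orientation (bidirection) of `G`: `dir e i = true` means that the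
half-edge `(e, i)` is directed towards its end-vertex, `dir e i = false` that
it is directed away from it.  Compatibility: a positive edge becomes an
ordinary directed edge (one half-edge in, one out) and a negative edge becomes
a broken (extroverted or introverted) edge. -/
structure Orientation (G : SignedGraph V E) where
  dir : E → Bool → Bool
  compat : ∀ e : E, G.sign e = 1 ↔ dir e false ≠ dir e true

/-- `φ` is a flow on `G` with respect to the orientation `O`: at every vertex
`v`, the sum of values on half-edges directed into `v` equals the sum of
values on half-edges directed out of `v` (Kirchhoff's law). -/
def IsFlow {A : Type} [AddCommGroup A] (G : SignedGraph V E)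
    (O : G.Orientation) (φ : E → A) : Prop :=
  ∀ v : V,
    ∑ p ∈ univ.filter (fun p : E × Bool => G.ends p.1 p.2 = v),
      (if O.dir p.1 p.2 then φ p.1 else -φ p.1) = 0

/-- `G` admits a nowhere-zero `A`-flow. -/
def HasNZFlow (G : SignedGraph V E) (A : Type) [AddCommGroup A] : Prop :=
  ∃ (O : G.Orientation) (φ : E → A), G.IsFlow O φ ∧ ∀ e : E, φ e ≠ 0

/-- `G` is flow-admissible: it admits a nowhere-zero integer flow. -/
def FlowAdmissible (G : SignedGraph V E) : Prop :=
  ∃ (O : G.Orientation) (φ : E → ℤ), G.IsFlow O φ ∧ ∀ e : E, φ e ≠ 0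

/-- `G` admits a nowhere-zero `k`-flow: an integer flow with all values in
`{±1, …, ±(k-1)}`. -/
def HasNZkFlow (G : SignedGraph V E) (k : ℕ) : Prop :=
  ∃ (O : G.Orientation) (φ : E → ℤ), G.IsFlow O φ ∧
    ∀ e : E, φ e ≠ 0 ∧ |φ e| < (k : ℤ)

/-- `G` is triply odd: it can be decomposed into three edge-disjoint eulerian
subgraphs, each with an odd number of negative edges, sharing a common
vertex. -/
def TriplyOdd (G : SignedGraph V E) : Prop :=
  ∃ S₁ S₂ S₃ : Finset E,
    Disjoint S₁ S₂ ∧ Disjoint S₁ S₃ ∧ Disjoint S₂ S₃ ∧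
    S₁ ∪ S₂ ∪ S₃ = univ ∧
    G.EulerianOn S₁ ∧ G.EulerianOn S₂ ∧ G.EulerianOn S₃ ∧
    Odd (G.negEdges S₁).card ∧ Odd (G.negEdges S₂).card ∧
    Odd (G.negEdges S₃).card ∧
    ∃ v : V, v ∈ G.suppV S₁ ∧ v ∈ G.suppV S₂ ∧ v ∈ G.suppV S₃

/-- The edge set `P` spans a (nontrivial) path from `u` to `v`: a connected
subgraph in which `u` and `v` have valency `1` and all other vertices have
valency `2`. -/
def IsPathOn (G : SignedGraph V E) (P : Finset E) (u v : V) : Prop :=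
  u ≠ v ∧ G.ConnOn P ∧ u ∈ G.suppV P ∧ v ∈ G.suppV P ∧
  G.valencyOn P u = 1 ∧ G.valencyOn P v = 1 ∧
  ∀ w ∈ G.suppV P, w ≠ u → w ≠ v → G.valencyOn P w = 2

/-- `T` spans a signed circuit of type (2): the union of two unbalanced
circuits meeting at a single vertex. -/
def IsType2 (G : SignedGraph V E) (T : Finset E) : Prop :=
  ∃ (S₁ S₂ : Finset E) (v : V),
    G.IsUnbalancedCircuit S₁ ∧ G.IsUnbalancedCircuit S₂ ∧ Disjoint S₁ S₂ ∧
    G.suppV S₁ ∩ G.suppV S₂ = {v} ∧ S₁ ∪ S₂ = T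

/-- `T` spans a signed circuit of type (3): the union of two vertex-disjoint
unbalanced circuits together with a path meeting the circuits only at its
ends. -/
def IsType3 (G : SignedGraph V E) (T : Finset E) : Prop :=
  ∃ (S₁ S₂ P : Finset E) (u v : V),
    G.IsUnbalancedCircuit S₁ ∧ G.IsUnbalancedCircuit S₂ ∧
    Disjoint (G.suppV S₁) (G.suppV S₂) ∧
    G.IsPathOn P u v ∧ u ∈ G.suppV S₁ ∧ v ∈ G.suppV S₂ ∧
    G.suppV P ∩ G.suppV S₁ = {u} ∧ G.suppV P ∩ G.suppV S₂ = {v} ∧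
    Disjoint P (S₁ ∪ S₂) ∧ S₁ ∪ S₂ ∪ P = T

/-- `T` spans a signed circuit: a balanced circuit, or a signed circuit of
type (2) or (3). -/
def IsSignedCircuit (G : SignedGraph V E) (T : Finset E) : Prop :=
  G.IsBalancedCircuit T ∨ G.IsType2 T ∨ G.IsType3 T

/-- `T` spans a weak unbalanced bicircuit: two edge-disjoint unbalanced
circuits (not necessarily vertex-disjoint) joined by a possibly trivial path
having no edge in the two circuits. -/
def IsWeakBicircuit (G : SignedGraph V E) (T : Finset E) : Prop :=
  ∃ C₁ C₂ : Finset E,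
    G.IsUnbalancedCircuit C₁ ∧ G.IsUnbalancedCircuit C₂ ∧ Disjoint C₁ C₂ ∧
    (((∃ v : V, v ∈ G.suppV C₁ ∧ v ∈ G.suppV C₂) ∧ T = C₁ ∪ C₂) ∨
      ∃ (P : Finset E) (u v : V),
        G.IsPathOn P u v ∧ u ∈ G.suppV C₁ ∧ v ∈ G.suppV C₂ ∧
        Disjoint P (C₁ ∪ C₂) ∧ T = C₁ ∪ C₂ ∪ P)

/-- Every connected component of `G - f` contains an unbalanced circuit,
i.e. `G - f` has no balanced component. -/
def NoBalancedComponentAvoiding (G : SignedGraph V E) (f : E) : Prop :=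
  ∀ u : V, ∃ S : Finset E,
    G.IsCircuit S ∧ G.signOf S = -1 ∧ f ∉ S ∧
    ∀ w ∈ G.suppV S, Relation.ReflTransGen (G.AdjOn (univ.erase f)) w u

/-- `G` is 2-edge-connected: connected, and still connected after removing
any single edge. -/
def TwoEdgeConnected (G : SignedGraph V E) : Prop :=
  G.Connected ∧ ∀ f : E, ∀ u v : V,
    Relation.ReflTransGen (G.AdjOn (univ.erase f)) u v

/-- `G` is antibalanced: replacing its signature `σ` by `-σ` makes it
balanced. -/
def Antibalanced (G : SignedGraph V E) : Prop :=
  ∀ S : Finset E, G.IsCircuit S → (∏ e ∈ S, (-G.sign e)) = 1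

section Aux

variable (G : SignedGraph V E)

lemma adjOn_symm {S : Finset E} : Symmetric (G.AdjOn S) := by
  rintro u v ⟨e, he, i, h1, h2⟩
  exact ⟨e, he, !i, h2, by simpa using h1⟩

lemma adjOn_mono {S T : Finset E} (h : S ⊆ T) {u v : V} :
    G.AdjOn S u v → G.AdjOn T u v := by
  rintro ⟨e, he, i, h1, h2⟩
  exact ⟨e, h he, i, h1, h2⟩

lemma mem_suppV_of_mem {S : Finset E} {e : E} (he : e ∈ S) (i : Bool) :
    G.ends e i ∈ G.suppV S := by
  simp only [suppV, mem_filter, mem_univ, true_and]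
  exact ⟨e, he, i, rfl⟩

lemma suppV_union (S T : Finset E) : G.suppV (S ∪ T) = G.suppV S ∪ G.suppV T := by
  ext v
  simp only [suppV, mem_filter, mem_univ, true_and, mem_union]
  constructor
  · rintro ⟨e, he | he, i, hi⟩
    · exact Or.inl ⟨e, he, i, hi⟩
    · exact Or.inr ⟨e, he, i, hi⟩
  · rintro (⟨e, he, i, hi⟩ | ⟨e, he, i, hi⟩)
    · exact ⟨e, Or.inl he, i, hi⟩
    · exact ⟨e, Or.inr he, i, hi⟩

lemma valencyOn_union {S T : Finset E} (h : Disjoint S T) (v : V) :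
    G.valencyOn (S ∪ T) v = G.valencyOn S v + G.valencyOn T v := by
  unfold valencyOn
  rw [← card_union_of_disjoint]
  · congr 1
    ext p
    simp only [mem_filter, mem_union, mem_univ, true_and]
    tauto
  · rw [Finset.disjoint_left]
    rintro p hp hq
    simp only [mem_filter] at hp hq
    exact (Finset.disjoint_left.1 h) hp.2.1 hq.2.1

lemma negEdges_union_card {S T : Finset E} (h : Disjoint S T) :
    (G.negEdges (S ∪ T)).card = (G.negEdges S).card + (G.negEdges T).card := by
  unfold negEdges
  rw [filter_union, card_union_of_disjoint]
  exact disjoint_filter_filter h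

lemma connOn_union {S T : Finset E} (hS : G.ConnOn S) (hT : G.ConnOn T) {v : V}
    (hvS : v ∈ G.suppV S) (hvT : v ∈ G.suppV T) : G.ConnOn (S ∪ T) := by
  have key : ∀ u ∈ G.suppV (S ∪ T), Relation.ReflTransGen (G.AdjOn (S ∪ T)) u v := by
    intro u hu
    rw [suppV_union] at hu
    rcases mem_union.1 hu with h | h
    · exact Relation.ReflTransGen.mono (fun _ _ => G.adjOn_mono subset_union_left) u v (hS u h v hvS)
    · exact Relation.ReflTransGen.mono (fun _ _ => G.adjOn_mono subset_union_right) u v (hT u h v hvT)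
  intro u hu w hw
  exact (key u hu).trans (((@Relation.ReflTransGen.stdSymm _ _ ⟨fun _ _ h => G.adjOn_symm h⟩).symm _ _) (key w hw))

lemma eulerianOn_union {S T : Finset E} (hS : G.EulerianOn S) (hT : G.EulerianOn T)
    (hd : Disjoint S T) {v : V} (hvS : v ∈ G.suppV S) (hvT : v ∈ G.suppV T) :
    G.EulerianOn (S ∪ T) := by
  refine ⟨hS.1.mono subset_union_left, G.connOn_union hS.2.1 hT.2.1 hvS hvT, fun w => ?_⟩
  rw [G.valencyOn_union hd]
  exact (hS.2.2 w).add (hT.2.2 w)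

lemma reach_stay {A B C : Finset E} (hcov : ∀ e : E, e ∈ A ∨ e ∈ B ∨ e ∈ C)
    (h12 : ¬ ∃ x, x ∈ G.suppV A ∧ x ∈ G.suppV B)
    (h13 : ¬ ∃ x, x ∈ G.suppV A ∧ x ∈ G.suppV C)
    {u w : V} (hu : u ∈ G.suppV A)
    (h : Relation.ReflTransGen (G.AdjOn univ) u w) : w ∈ G.suppV A := by
  induction h with
  | refl => exact hu
  | tail _ hadj ih =>
    obtain ⟨e, _, i, hx, hy⟩ := hadj
    rcases hcov e with he | he | he
    · exact hy ▸ G.mem_suppV_of_mem he (!i)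
    · exact absurd ⟨_, ih, hx ▸ G.mem_suppV_of_mem he i⟩ h12
    · exact absurd ⟨_, ih, hx ▸ G.mem_suppV_of_mem he i⟩ h13

lemma isolated_absurd (hconn : G.Connected) {A B C : Finset E}
    (hcov : ∀ e : E, e ∈ A ∨ e ∈ B ∨ e ∈ C)
    (hAne : A.Nonempty) (hBne : B.Nonempty)
    (h12 : ¬ ∃ x, x ∈ G.suppV A ∧ x ∈ G.suppV B)
    (h13 : ¬ ∃ x, x ∈ G.suppV A ∧ x ∈ G.suppV C) : False := by
  obtain ⟨e, he⟩ := hAne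
  obtain ⟨f, hf⟩ := hBne
  have hu := G.mem_suppV_of_mem he false
  have hw := G.mem_suppV_of_mem hf false
  have hreach := hconn.2 (G.ends e false) (G.ends f false)
  exact h12 ⟨_, G.reach_stay hcov h12 h13 hu hreach, hw⟩

end Aux

end SignedGraph

open SignedGraph Finset in
/-- If a signed eulerian graph `G` can be decomposed into three
edge-disjoint eulerian subgraphs each having an odd number of negative edges,
then `G` is the union of two eulerian subgraphs each having an even number of
negative edges. -/
theorem stmt12 {V E : Type} [Fintype V] [Fintype E] [DecidableEq V]
    [DecidableEq E] (G : SignedGraph V E) (hG : G.Eulerian)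
    (hdec : ∃ S₁ S₂ S₃ : Finset E,
      Disjoint S₁ S₂ ∧ Disjoint S₁ S₃ ∧ Disjoint S₂ S₃ ∧
      S₁ ∪ S₂ ∪ S₃ = univ ∧
      G.EulerianOn S₁ ∧ G.EulerianOn S₂ ∧ G.EulerianOn S₃ ∧
      Odd (G.negEdges S₁).card ∧ Odd (G.negEdges S₂).card ∧
      Odd (G.negEdges S₃).card) :
    ∃ H₁ H₂ : Finset E,
      G.EulerianOn H₁ ∧ G.EulerianOn H₂ ∧
      Even (G.negEdges H₁).card ∧ Even (G.negEdges H₂).card ∧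
      H₁ ∪ H₂ = univ := by
  classical
  obtain ⟨S₁, S₂, S₃, h12, h13, h23, hcov, hE1, hE2, hE3, hO1, hO2, hO3⟩ := hdec
  have hcov' : ∀ e : E, e ∈ S₁ ∨ e ∈ S₂ ∨ e ∈ S₃ := by
    intro e
    have : e ∈ S₁ ∪ S₂ ∪ S₃ := hcov ▸ mem_univ e
    simpa [mem_union, or_assoc] using this
  -- combining lemma
  have combine : ∀ {A B : Finset E}, G.EulerianOn A → G.EulerianOn B → Disjoint A B →
      Odd (G.negEdges A).card → Odd (G.negEdges B).card →
      (∃ v, v ∈ G.suppV A ∧ v ∈ G.suppV B) →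
      G.EulerianOn (A ∪ B) ∧ Even (G.negEdges (A ∪ B)).card := by
    rintro A B hA hB hd hoA hoB ⟨v, hvA, hvB⟩
    refine ⟨G.eulerianOn_union hA hB hd hvA hvB, ?_⟩
    rw [G.negEdges_union_card hd]
    exact hoA.add_odd hoB
  by_cases m12 : ∃ x, x ∈ G.suppV S₁ ∧ x ∈ G.suppV S₂
  · by_cases m13 : ∃ x, x ∈ G.suppV S₁ ∧ x ∈ G.suppV S₃
    · -- middle S₁
      obtain ⟨hH1, he1⟩ := combine hE1 hE2 h12 hO1 hO2 m12
      obtain ⟨hH2, he2⟩ := combine hE1 hE3 h13 hO1 hO3 m13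
      refine ⟨S₁ ∪ S₂, S₁ ∪ S₃, hH1, hH2, he1, he2, ?_⟩
      rw [eq_univ_iff_forall]
      intro e
      rcases hcov' e with h | h | h <;> simp [h]
    · by_cases m23 : ∃ x, x ∈ G.suppV S₂ ∧ x ∈ G.suppV S₃
      · -- middle S₂
        obtain ⟨hH1, he1⟩ := combine hE1 hE2 h12 hO1 hO2 m12
        obtain ⟨hH2, he2⟩ := combine hE2 hE3 h23 hO2 hO3 m23
        refine ⟨S₁ ∪ S₂, S₂ ∪ S₃, hH1, hH2, he1, he2, ?_⟩
        rw [eq_univ_iff_forall]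
        intro e
        rcases hcov' e with h | h | h <;> simp [h]
      · -- S₃ isolated
        exact absurd (G.isolated_absurd hG.1 (fun e => by rcases hcov' e with h|h|h <;> tauto)
          hE3.1 hE1.1 (fun ⟨x, hx, hy⟩ => m13 ⟨x, hy, hx⟩)
          (fun ⟨x, hx, hy⟩ => m23 ⟨x, hy, hx⟩)) not_false
  · by_cases m13 : ∃ x, x ∈ G.suppV S₁ ∧ x ∈ G.suppV S₃
    · by_cases m23 : ∃ x, x ∈ G.suppV S₂ ∧ x ∈ G.suppV S₃
      · -- middle S₃
        obtain ⟨hH1, he1⟩ := combine hE1 hE3 h13 hO1 hO3 m13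
        obtain ⟨hH2, he2⟩ := combine hE2 hE3 h23 hO2 hO3 m23
        refine ⟨S₁ ∪ S₃, S₂ ∪ S₃, hH1, hH2, he1, he2, ?_⟩
        rw [eq_univ_iff_forall]
        intro e
        rcases hcov' e with h | h | h <;> simp [h]
      · -- S₂ isolated
        exact absurd (G.isolated_absurd hG.1 (fun e => by rcases hcov' e with h|h|h <;> tauto)
          hE2.1 hE1.1 (fun ⟨x, hx, hy⟩ => m12 ⟨x, hy, hx⟩) m23) not_false
    · -- S₁ isolated
      exact absurd (G.isolated_absurd hG.1 hcov' hE1.1 hE2.1 m12 m13) not_false
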